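/- Let r be a rate function and φ = r⁻¹ its (convex, strictly increasing, continuous) inverse. Let a < b and let B₁, B₂ : [a,b] → ℝ be piecewise continuously differentiable, nondecreasing functions with B₂ convex, B₁(t) ≤ B₂(t) for all t ∈ [a,b], B₁(a) = B₂(a), and B₁(b) = B₂(b). Then ∫ₐᵇ φ(B₂'(t)) dt ≤ ∫ₐᵇ φ(B₁'(t)) dt; i.e., a convex transmitted data curve pointwise dominating another curve with the same endpoints uses no more energy. -/

import Mathlib

/-!
Let `ψ y` be the infimum of the slopes of `φ` to the right of `y` (the right derivative). For
convex nondecreasing `φ` it is a nonnegative, nondecreasing subgradient: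
`φ x ≥ φ y + ψ y * (x - y)`. Since `B₂` is convex, `B₂'` is nondecreasing, so `G = ψ ∘ B₂'` is a
nondecreasing weight `≥ 0`, and pointwise `φ (B₁') ≥ φ (B₂') + G * (B₁' - B₂')`. It remains to see
`∫ G * (B₁' - B₂') ≥ 0`. Writing `G t = ∫ λ in (0, ∞), 1{λ ≤ G t}` and applying Fubini, this is an
integral over `λ` of `∫ (B₁' - B₂')` over the level sets `{G ≥ λ}`; each of those is an interval
`[u, b]` up to a null set, where the integral is `B₂ u - B₁ u ≥ 0`.
-/

open MeasureTheory Set Filter intervalIntegral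

noncomputable section

/-- `φ` is the inverse of the rate function `r` on `[0,∞)`. -/
def IsInverseOn (φ r : ℝ → ℝ) : Prop :=
  (∀ p : ℝ, 0 ≤ p → φ (r p) = p) ∧ (∀ y : ℝ, 0 ≤ y → r (φ y) = y) ∧
    (∀ y : ℝ, 0 ≤ y → 0 ≤ φ y)

/-- `f` is piecewise continuously differentiable on `[a,b]` with derivative `f'`:
`f` is continuous, differentiable with derivative `f'` off a finite set, and `f'`
is piecewise continuous and bounded. -/
def PiecewiseC1On (a b : ℝ) (f f' : ℝ → ℝ) : Prop :=
  ContinuousOn f (Set.Icc a b) ∧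
  (∃ s : Finset ℝ, (∀ t ∈ Set.Ioo a b, t ∉ s → HasDerivAt f (f' t) t) ∧
    ContinuousOn f' (Set.Icc a b \ (s : Set ℝ))) ∧
  (∃ M : ℝ, ∀ t ∈ Set.Icc a b, |f' t| ≤ M)

/-- A rate function: continuous, strictly increasing, concave on `[0,∞)`,
vanishing at `0` and tending to `∞`. -/
def IsRateFunction (r : ℝ → ℝ) : Prop :=
  ContinuousOn r (Set.Ici 0) ∧ StrictMonoOn r (Set.Ici 0) ∧
    ConcaveOn ℝ (Set.Ici 0) r ∧ r 0 = 0 ∧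
    Filter.Tendsto r Filter.atTop Filter.atTop

open Topology

def rightSlopeInf (φ : ℝ → ℝ) (y : ℝ) : ℝ :=
  sInf (slope φ y '' Ioi y)

section RightSlopeInf

variable {φ : ℝ → ℝ} {c x y : ℝ}

lemma zero_mem_lowerBounds_slope_image_Ioi (hφ : MonotoneOn φ (Ici c)) (hy : c ≤ y) :
    0 ∈ lowerBounds (slope φ y '' Ioi y) := by
  rintro _ ⟨z, hz, rfl⟩
  exact hφ.slope_nonneg hy (hy.trans (le_of_lt hz))

lemma rightSlopeInf_nonneg (hφ : MonotoneOn φ (Ici c)) (hy : c ≤ y) :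
    0 ≤ rightSlopeInf φ y :=
  le_csInf (nonempty_Ioi.image _) (zero_mem_lowerBounds_slope_image_Ioi hφ hy)

lemma rightSlopeInf_le_slope (hφ : MonotoneOn φ (Ici c)) (hy : c ≤ y) (hyx : y < x) :
    rightSlopeInf φ y ≤ slope φ y x :=
  csInf_le ⟨0, zero_mem_lowerBounds_slope_image_Ioi hφ hy⟩ (mem_image_of_mem _ hyx)

lemma slope_le_rightSlopeInf (hφ : ConvexOn ℝ (Ici c) φ) (hx : c ≤ x) (hxy : x < y) :
    slope φ y x ≤ rightSlopeInf φ y := by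
  refine le_csInf (nonempty_Ioi.image _) ?_
  rintro _ ⟨z, hz, rfl⟩
  have hy : c ≤ y := hx.trans hxy.le
  exact hφ.slope_mono hy ⟨hx, hxy.ne⟩ ⟨hy.trans (le_of_lt hz), (ne_of_lt hz).symm⟩
    (hxy.trans hz).le

lemma monotoneOn_rightSlopeInf (hφm : MonotoneOn φ (Ici c)) (hφc : ConvexOn ℝ (Ici c) φ) :
    MonotoneOn (rightSlopeInf φ) (Ici c) := by
  intro y₁ hy₁ y₂ _ h
  rcases h.eq_or_lt with rfl | hlt
  · rfl
  calc rightSlopeInf φ y₁ ≤ slope φ y₁ y₂ := rightSlopeInf_le_slope hφm hy₁ hlt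
    _ = slope φ y₂ y₁ := slope_comm _ _ _
    _ ≤ rightSlopeInf φ y₂ := slope_le_rightSlopeInf hφc hy₁ hlt

lemma add_rightSlopeInf_mul_sub_le (hφm : MonotoneOn φ (Ici c)) (hφc : ConvexOn ℝ (Ici c) φ)
    (hx : c ≤ x) (hy : c ≤ y) : φ y + rightSlopeInf φ y * (x - y) ≤ φ x := by
  have key : slope φ y x * (x - y) = φ x - φ y := by
    rw [mul_comm, ← smul_eq_mul, sub_smul_slope, vsub_eq_sub]
  rcases lt_trichotomy x y with hlt | rfl | hgt
  · have := mul_le_mul_of_nonpos_right (slope_le_rightSlopeInf hφc hx hlt)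
      (sub_nonpos.2 hlt.le)
    linarith
  · simp
  · have := mul_le_mul_of_nonneg_right (rightSlopeInf_le_slope hφm hy hgt)
      (sub_nonneg.2 hgt.le)
    linarith

end RightSlopeInf

lemma HasDerivAt.nonneg_of_monotoneOn_of_mem_nhds {f : ℝ → ℝ} {s : Set ℝ} {d t : ℝ}
    (hd : HasDerivAt f d t) (hf : MonotoneOn f s) (hs : s ∈ 𝓝 t) : 0 ≤ d :=
  hd.hasDerivWithinAt.nonneg_of_monotoneOn
    (by simpa using (PerfectSpace.univ_preperfect t trivial).nhds_inter hs) hf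

lemma ConvexOn.monotoneOn_of_hasDerivAt {S : Set ℝ} {f f' : ℝ → ℝ} (hf : ConvexOn ℝ S f) :
    MonotoneOn f' {t | t ∈ S ∧ HasDerivAt f (f' t) t} := by
  rintro x ⟨hxS, hx⟩ y ⟨hyS, hy⟩ hxy
  rcases hxy.eq_or_lt with rfl | hlt
  · rfl
  exact (hf.le_slope_of_hasDerivAt hxS hyS hlt hx).trans
    (hf.slope_le_of_hasDerivAt hxS hyS hlt hy)

lemma MonotoneOn.exists_monotone_nonneg_extension {g : ℝ → ℝ} {T : Set ℝ}
    (hg : MonotoneOn g T) (hg0 : ∀ t ∈ T, 0 ≤ g t) (hbdd : BddAbove (g '' T)) :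
    ∃ G : ℝ → ℝ, Monotone G ∧ (∀ t, 0 ≤ G t) ∧ EqOn G g T := by
  have hbdd' : ∀ t, BddAbove (g '' (T ∩ Iic t)) :=
    fun t => hbdd.mono (image_mono inter_subset_left)
  have hnonneg : ∀ t, 0 ≤ sSup (g '' (T ∩ Iic t)) := fun t =>
    Real.sSup_nonneg (by rintro _ ⟨u, hu, rfl⟩; exact hg0 u hu.1)
  refine ⟨fun t => sSup (g '' (T ∩ Iic t)), fun s t hst => ?_, hnonneg, fun t ht => ?_⟩
  · refine Real.sSup_le ?_ (hnonneg t)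
    rintro _ ⟨u, hu, rfl⟩
    exact le_csSup (hbdd' t) ⟨u, ⟨hu.1, hu.2.trans hst⟩, rfl⟩
  · refine le_antisymm (csSup_le ⟨g t, t, ⟨ht, mem_Iic.2 le_rfl⟩, rfl⟩ ?_)
      (le_csSup (hbdd' t) ⟨t, ⟨ht, mem_Iic.2 le_rfl⟩, rfl⟩)
    rintro _ ⟨u, hu, rfl⟩
    exact hg hu.1 ht hu.2

lemma IsUpperSet.exists_Ioc_inter_ae_eq {S : Set ℝ} (hS : IsUpperSet S) {a b : ℝ} (hab : a ≤ b) :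
    ∃ u ∈ Icc a b, (Ioc a b ∩ S : Set ℝ) =ᵐ[volume] Ioc u b := by
  rcases (Ioc a b ∩ S).eq_empty_or_nonempty with he | hne
  · exact ⟨b, ⟨hab, le_rfl⟩, by simp [he]⟩
  have hbdd : BddBelow (Ioc a b ∩ S) := ⟨a, fun x hx => hx.1.1.le⟩
  set u := sInf (Ioc a b ∩ S)
  have hau : a ≤ u := le_csInf hne fun x hx => hx.1.1.le
  have hsub : Ioc a b ∩ S ⊆ Icc u b := fun x hx => ⟨csInf_le hbdd hx, hx.1.2⟩
  have hsup : Ioo u b ⊆ Ioc a b ∩ S := fun x hx => by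
    obtain ⟨y, hy, hyx⟩ := exists_lt_of_csInf_lt hne hx.1
    exact ⟨⟨hau.trans_lt hx.1, hx.2.le⟩, hS hyx.le hy.2⟩
  have hub : u ≤ b := let ⟨_, hx⟩ := hne; (hsub hx).1.trans hx.1.2
  exact ⟨u, ⟨hau, hub⟩, (hsub.eventuallyLE.trans Ioc_ae_eq_Icc.symm.le).antisymm
    (Ioo_ae_eq_Ioc.symm.le.trans hsup.eventuallyLE)⟩

theorem integral_monotone_mul_nonneg {G h : ℝ → ℝ} {a b : ℝ} (hab : a ≤ b) (hG : Monotone G)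
    (hG0 : ∀ t, 0 ≤ G t) (hh : IntervalIntegrable h volume a b)
    (hH : ∀ u ∈ Icc a b, 0 ≤ ∫ t in u..b, h t) :
    0 ≤ ∫ t in a..b, G t * h t := by
  set ρ := volume.restrict (Ioc 0 (G b))
  set F : ℝ × ℝ → ℝ := {p | p.2 ≤ G p.1}.indicator fun p => h p.1
  have hF : Integrable F ((volume.restrict (Ioc a b)).prod ρ) :=
    (hh.1.comp_fst ρ).indicator
      (measurableSet_le measurable_snd (hG.measurable.comp measurable_fst))
  have hlayer : ∀ t ∈ Ioc a b, ∫ s, F (t, s) ∂ρ = G t * h t := by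
    intro t ht
    calc ∫ s, F (t, s) ∂ρ = ∫ s, (Iic (G t)).indicator (fun _ => h t) s ∂ρ := rfl
      _ = volume.real (Iic (G t) ∩ Ioc 0 (G b)) * h t := by
        rw [integral_indicator_const _ measurableSet_Iic,
          measureReal_restrict_apply measurableSet_Iic, smul_eq_mul]
      _ = G t * h t := by
        rw [Iic_inter_Ioc_of_le (hG ht.2), Real.volume_real_Ioc_of_le (hG0 t), sub_zero]
  have hslice : ∀ s, 0 ≤ ∫ t in Ioc a b, F (t, s) := by
    intro s
    have hS : IsUpperSet {t | s ≤ G t} := fun x y hxy hx => le_trans hx (hG hxy)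
    obtain ⟨u, hu, hae⟩ := hS.exists_Ioc_inter_ae_eq hab
    calc 0 ≤ ∫ t in u..b, h t := hH u hu
      _ = ∫ t in Ioc a b ∩ {t | s ≤ G t}, h t := by
        rw [intervalIntegral.integral_of_le hu.2, setIntegral_congr_set hae]
      _ = ∫ t in Ioc a b, F (t, s) :=
        (setIntegral_indicator (measurableSet_le measurable_const hG.measurable)).symm
  rw [intervalIntegral.integral_of_le hab]
  calc 0 ≤ ∫ s, (∫ t in Ioc a b, F (t, s)) ∂ρ := integral_nonneg hslice
    _ = ∫ t in Ioc a b, ∫ s, F (t, s) ∂ρ :=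
      (integral_integral_swap (f := fun t s => F (t, s)) hF).symm
    _ = ∫ t in Ioc a b, G t * h t := setIntegral_congr_fun measurableSet_Ioc hlayer

lemma Monotone.integrableOn_mul {G h : ℝ → ℝ} {a b : ℝ} (hG : Monotone G)
    (hh : IntegrableOn h (Icc a b)) : IntegrableOn (fun t => G t * h t) (Icc a b) :=
  hh.bdd_mul hG.measurable.aestronglyMeasurable (c := max |G a| |G b|) <| by
    filter_upwards [ae_restrict_mem measurableSet_Icc] with t ht
    exact abs_le_max_abs_abs (hG ht.1) (hG ht.2)

namespace PiecewiseC1On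

variable {a b : ℝ} {f f' g g' : ℝ → ℝ}

lemma mono (hf : PiecewiseC1On a b f f') {u v : ℝ} (hu : a ≤ u) (hv : v ≤ b) :
    PiecewiseC1On u v f f' := by
  obtain ⟨hc, ⟨s, hs, hs'⟩, M, hM⟩ := hf
  have hsub : Icc u v ⊆ Icc a b := Icc_subset_Icc hu hv
  exact ⟨hc.mono hsub, ⟨s, fun t ht => hs t (Ioo_subset_Ioo hu hv ht),
    hs'.mono (sdiff_subset_sdiff_left hsub)⟩, M, fun t ht => hM t (hsub ht)⟩

lemma sub (hf : PiecewiseC1On a b f f') (hg : PiecewiseC1On a b g g') :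
    PiecewiseC1On a b (f - g) (f' - g') := by
  obtain ⟨hfc, ⟨s, hs, hs'⟩, M, hM⟩ := hf
  obtain ⟨hgc, ⟨r, hr, hr'⟩, N, hN⟩ := hg
  refine ⟨hfc.sub hgc, ⟨s ∪ r, fun t ht htsr => ?_, ?_⟩, M + N, fun t ht => ?_⟩
  · rw [Finset.mem_union, not_or] at htsr
    exact (hs t ht htsr.1).sub (hr t ht htsr.2)
  · rw [Finset.coe_union, ← sdiff_sdiff]
    exact (hs'.mono sdiff_subset).sub (hr'.mono (sdiff_subset_sdiff_left sdiff_subset))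
  · exact (abs_sub _ _).trans (add_le_add (hM t ht) (hN t ht))

lemma ae_hasDerivAt (hf : PiecewiseC1On a b f f') :
    ∀ᵐ t ∂volume.restrict (Icc a b), t ∈ Ioo a b ∧ HasDerivAt f (f' t) t := by
  obtain ⟨-, ⟨s, hs, -⟩, -⟩ := hf
  have hE : (Ioo a b \ s : Set ℝ) =ᵐ[volume] Icc a b :=
    (sdiff_null_ae_eq_self (s.finite_toSet.measure_zero _)).trans Ioo_ae_eq_Icc
  filter_upwards [Measure.restrict_congr_set hE ▸
    ae_restrict_mem (measurableSet_Ioo.diff s.finite_toSet.measurableSet)] with t ht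
  exact ⟨ht.1, hs t ht.1 ht.2⟩

lemma ae_deriv_nonneg (hf : PiecewiseC1On a b f f') (hmono : MonotoneOn f (Icc a b)) :
    ∀ᵐ t ∂volume.restrict (Icc a b), 0 ≤ f' t := by
  filter_upwards [hf.ae_hasDerivAt] with t ht
  exact ht.2.nonneg_of_monotoneOn_of_mem_nhds hmono (Icc_mem_nhds ht.1.1 ht.1.2)

lemma integrableOn_deriv (hf : PiecewiseC1On a b f f') : IntegrableOn f' (Icc a b) := by
  obtain ⟨-, ⟨s, -, hcont⟩, M, hM⟩ := hf
  have hE : (Icc a b \ s : Set ℝ) =ᵐ[volume] Icc a b :=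
    sdiff_null_ae_eq_self (s.finite_toSet.measure_zero _)
  refine IntegrableOn.of_bound measure_Icc_lt_top ?_ M ?_
  · rw [← Measure.restrict_congr_set hE]
    exact hcont.aestronglyMeasurable (measurableSet_Icc.diff s.finite_toSet.measurableSet)
  · filter_upwards [ae_restrict_mem measurableSet_Icc] with t ht using hM t ht

lemma integral_deriv_eq_sub (hf : PiecewiseC1On a b f f') (hab : a ≤ b) :
    ∫ t in a..b, f' t = f b - f a := by
  obtain ⟨s, hs, -⟩ := hf.2.1
  exact integral_eq_of_hasDerivAt_off_countable_of_le f f' hab s.finite_toSet.countable hf.1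
    (fun t ht => hs t ht.1 ht.2)
    ((intervalIntegrable_iff_integrableOn_Icc_of_le hab).2 hf.integrableOn_deriv)

lemma integrableOn_comp_deriv (hf : PiecewiseC1On a b f f') (hmono : MonotoneOn f (Icc a b))
    {φ : ℝ → ℝ} (hφ : ContinuousOn φ (Ici 0)) :
    IntegrableOn (fun t => φ (f' t)) (Icc a b) := by
  obtain ⟨-, ⟨s, hs, hcont⟩, M, hM⟩ := hf
  set E := Ioo a b \ (s : Set ℝ)
  have hEmeas : MeasurableSet E := measurableSet_Ioo.diff s.finite_toSet.measurableSet
  have hE : E =ᵐ[volume] Icc a b :=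
    (sdiff_null_ae_eq_self (s.finite_toSet.measure_zero _)).trans Ioo_ae_eq_Icc
  have hmaps : MapsTo f' E (Icc 0 M) := fun t ht =>
    ⟨(hs t ht.1 ht.2).nonneg_of_monotoneOn_of_mem_nhds hmono (Icc_mem_nhds ht.1.1 ht.1.2),
      (le_abs_self _).trans (hM t (Ioo_subset_Icc_self ht.1))⟩
  have hφM : ContinuousOn φ (Icc 0 M) := hφ.mono Icc_subset_Ici_self
  obtain ⟨C, hC⟩ := isCompact_Icc.exists_bound_of_continuousOn hφM
  rw [← integrableOn_congr_set_ae hE]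
  refine IntegrableOn.of_bound ((measure_mono sdiff_subset).trans_lt measure_Ioo_lt_top) ?_ C ?_
  · exact (hφM.comp (hcont.mono (sdiff_subset_sdiff_left Ioo_subset_Icc_self)) hmaps
      ).aestronglyMeasurable hEmeas
  · filter_upwards [ae_restrict_mem hEmeas] with t ht using hC _ (hmaps ht)

end PiecewiseC1On

theorem exists_monotone_subgradient_comp_deriv {φ B B' : ℝ → ℝ} {a b : ℝ}
    (hφm : MonotoneOn φ (Ici 0)) (hφc : ConvexOn ℝ (Ici 0) φ) (hB : PiecewiseC1On a b B B')
    (hBm : MonotoneOn B (Icc a b)) (hBc : ConvexOn ℝ (Icc a b) B) :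
    ∃ G : ℝ → ℝ, Monotone G ∧ (∀ t, 0 ≤ G t) ∧ ∀ᵐ t ∂volume.restrict (Icc a b),
      ∀ x, 0 ≤ x → φ (B' t) + G t * (x - B' t) ≤ φ x := by
  set T := {t | t ∈ Ioo a b ∧ HasDerivAt B (B' t) t}
  have hT_nonneg : ∀ t ∈ T, 0 ≤ B' t := fun t ht =>
    ht.2.nonneg_of_monotoneOn_of_mem_nhds hBm (Icc_mem_nhds ht.1.1 ht.1.2)
  have hψ := monotoneOn_rightSlopeInf hφm hφc
  have hB' : MonotoneOn B' T :=
    hBc.monotoneOn_of_hasDerivAt.mono fun t ht => ⟨Ioo_subset_Icc_self ht.1, ht.2⟩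
  obtain ⟨M, hM⟩ := hB.2.2
  have hbdd : BddAbove ((rightSlopeInf φ ∘ B') '' T) := by
    refine ⟨rightSlopeInf φ M, ?_⟩
    rintro _ ⟨t, ht, rfl⟩
    have hle : B' t ≤ M := (le_abs_self _).trans (hM t (Ioo_subset_Icc_self ht.1))
    exact hψ (hT_nonneg t ht) ((hT_nonneg t ht).trans hle) hle
  -- `B'` is only known to be monotone where `B` is differentiable, hence the extension to `ℝ`.
  obtain ⟨G, hG, hG0, hGT⟩ := MonotoneOn.exists_monotone_nonneg_extension
    (fun s hs t ht hst => hψ (hT_nonneg s hs) (hT_nonneg t ht) (hB' hs ht hst))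
    (fun t ht => rightSlopeInf_nonneg hφm (hT_nonneg t ht)) hbdd
  refine ⟨G, hG, hG0, ?_⟩
  filter_upwards [hB.ae_hasDerivAt] with t ht x hx
  rw [hGT ht]
  exact add_rightSlopeInf_mul_sub_le hφm hφc hx (hT_nonneg t ht)

theorem convex_dominating_curve_less_energy_general
    (φ : ℝ → ℝ)
    (hφ_cont : ContinuousOn φ (Set.Ici 0))
    (hφ_mono : StrictMonoOn φ (Set.Ici 0))
    (hφ_convex : ConvexOn ℝ (Set.Ici 0) φ)
    (a b : ℝ) (hab : a < b)
    (B₁ B₁' B₂ B₂' : ℝ → ℝ)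
    (hB₁_pc1 : PiecewiseC1On a b B₁ B₁') (hB₂_pc1 : PiecewiseC1On a b B₂ B₂')
    (hB₁_mono : MonotoneOn B₁ (Set.Icc a b)) (hB₂_mono : MonotoneOn B₂ (Set.Icc a b))
    (hB₂_convex : ConvexOn ℝ (Set.Icc a b) B₂)
    (h_le : ∀ t ∈ Set.Icc a b, B₁ t ≤ B₂ t)
    (h_end : B₁ b = B₂ b) :
    (∫ t in a..b, φ (B₂' t)) ≤ ∫ t in a..b, φ (B₁' t) := by
  obtain ⟨G, hG, hG0, hG_sub⟩ := exists_monotone_subgradient_comp_deriv hφ_mono.monotoneOn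
    hφ_convex hB₂_pc1 hB₂_mono hB₂_convex
  have hsubgrad : ∀ᵐ t ∂volume.restrict (Icc a b),
      φ (B₂' t) + G t * (B₁' - B₂') t ≤ φ (B₁' t) := by
    filter_upwards [hG_sub, hB₁_pc1.ae_deriv_nonneg hB₁_mono] with t ht h₁ using ht _ h₁
  have hgap : ∀ u ∈ Icc a b, 0 ≤ ∫ t in u..b, (B₁' - B₂') t := by
    intro u hu
    rw [((hB₁_pc1.sub hB₂_pc1).mono hu.1 le_rfl).integral_deriv_eq_sub hu.2, Pi.sub_apply,
      Pi.sub_apply, h_end]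
    linarith [h_le u hu]
  have hii : ∀ {F : ℝ → ℝ}, IntegrableOn F (Icc a b) → IntervalIntegrable F volume a b :=
    (intervalIntegrable_iff_integrableOn_Icc_of_le hab.le).2
  have hφ₂ := hii (hB₂_pc1.integrableOn_comp_deriv hB₂_mono hφ_cont)
  have hGh := hii (hG.integrableOn_mul (hB₁_pc1.sub hB₂_pc1).integrableOn_deriv)
  calc ∫ t in a..b, φ (B₂' t)
      ≤ (∫ t in a..b, φ (B₂' t)) + ∫ t in a..b, G t * (B₁' - B₂') t :=
        le_add_of_nonneg_right (integral_monotone_mul_nonneg hab.le hG hG0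
          (hii (hB₁_pc1.sub hB₂_pc1).integrableOn_deriv) hgap)
    _ = ∫ t in a..b, (φ (B₂' t) + G t * (B₁' - B₂') t) := (integral_add hφ₂ hGh).symm
    _ ≤ ∫ t in a..b, φ (B₁' t) := integral_mono_ae_restrict hab.le (hφ₂.add hGh)
        (hii (hB₁_pc1.integrableOn_comp_deriv hB₁_mono hφ_cont)) hsubgrad

/-- Non-strict energy-comparison inequality: a convex transmitted data curve
`B₂` pointwise dominating `B₁`, with the same endpoints, uses no more energy. -/
theorem convex_dominating_curve_less_energy
    (r φ : ℝ → ℝ) (hr : IsRateFunction r) (hφ : IsInverseOn φ r)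
    (hφ_cont : ContinuousOn φ (Set.Ici 0))
    (hφ_mono : StrictMonoOn φ (Set.Ici 0))
    (hφ_convex : ConvexOn ℝ (Set.Ici 0) φ)
    (a b : ℝ) (hab : a < b)
    (B₁ B₁' B₂ B₂' : ℝ → ℝ)
    (hB₁_pc1 : PiecewiseC1On a b B₁ B₁') (hB₂_pc1 : PiecewiseC1On a b B₂ B₂')
    (hB₁_mono : MonotoneOn B₁ (Set.Icc a b)) (hB₂_mono : MonotoneOn B₂ (Set.Icc a b))
    (hB₂_convex : ConvexOn ℝ (Set.Icc a b) B₂)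
    (h_le : ∀ t ∈ Set.Icc a b, B₁ t ≤ B₂ t)
    (h_start : B₁ a = B₂ a) (h_end : B₁ b = B₂ b) :
    (∫ t in a..b, φ (B₂' t)) ≤ ∫ t in a..b, φ (B₁' t) :=
  convex_dominating_curve_less_energy_general φ hφ_cont hφ_mono hφ_convex a b hab B₁ B₁' B₂ B₂'
    hB₁_pc1 hB₂_pc1 hB₁_mono hB₂_mono hB₂_convex h_le h_end
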